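/- arXiv:1104.3293 — 7 statements merged into one kernel-verified Lean document; each statement's English description precedes it below -/
import Mathlib

section
/- There exist natural numbers p, q > 1, an enumeration (m_i, n_i) of all pairs of naturals greater than 1 such that p^{m_0} q^{n_0} < p^{m_1} q^{n_1} < ..., and positive rationals a_k defined by a_{4i+1} = p^{-m_i} q^{-n_i}, a_{4i+2} = m_i p^{-m_i} q^{-n_i}, a_{4i+3} = m_i n_i p^{-m_i} q^{-n_i}, a_{4i+4} = n_i p^{-m_i} q^{-n_i}, such that ∑_{k=1}^∞ a_k converges to a rational number a < 1. -/
/-! Take `p = 2`, `q = 5`, and let `(mᵢ, nᵢ)` run through the pairs in the order of the increasing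
enumeration of the (injective) image of `(M, N) ↦ 2^M 5^N`. The four terms of block `i` add up to
`(1 + mᵢ)(1 + nᵢ) 2^(-mᵢ) 5^(-nᵢ)`, so, all terms being nonnegative, the series factors as
`(∑_{m ≥ 2} (m + 1) 2^(-m)) (∑_{n ≥ 2} (n + 1) 5^(-n)) = 2 · 13/80 = 13/40`. -/

open Function

theorem exists_equiv_strictMono_comp {α : Type*} [Infinite α] {e : α → ℕ} (he : Injective e) :
    ∃ σ : ℕ ≃ α, StrictMono (e ∘ σ) := by
  have : Infinite (Set.range e) := (Set.infinite_range_of_injective he).to_subtype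
  refine ⟨(Nat.Subtype.orderIsoOfNat _).toEquiv.trans (Equiv.ofInjective e he).symm, ?_⟩
  intro i j hij
  simpa [Equiv.apply_ofInjective_symm] using
    (Nat.Subtype.orderIsoOfNat (Set.range e)).strictMono hij

theorem Nat.Prime.pow_mul_pow_injective {p q : ℕ} (hp : p.Prime) (hq : q.Prime) (hpq : p ≠ q) :
    Injective fun x : ℕ × ℕ => p ^ x.1 * q ^ x.2 := by
  have hfac (M N : ℕ) :
      (p ^ M * q ^ N).factorization = Finsupp.single p M + Finsupp.single q N := by
    rw [Nat.factorization_mul (pow_ne_zero _ hp.ne_zero) (pow_ne_zero _ hq.ne_zero),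
      hp.factorization_pow, hq.factorization_pow]
  rintro ⟨M, N⟩ ⟨M', N'⟩ h
  have h' := congrArg Nat.factorization h
  simp only [hfac] at h'
  have hP := congrArg (· p) h'
  have hQ := congrArg (· q) h'
  simp only [Finsupp.coe_add, Pi.add_apply, Finsupp.single_eq_same, Finsupp.single_eq_of_ne hpq,
    Finsupp.single_eq_of_ne hpq.symm, add_zero, zero_add] at hP hQ
  simp [hP, hQ]

theorem hasSum_prod_of_fiberwise_of_nonneg {α β : Type*} {f : α × β → ℝ} (hf : 0 ≤ f)
    {g : α → ℝ} {s : ℝ} (hfib : ∀ a, HasSum (fun b => f (a, b)) (g a)) (hg : HasSum g s) :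
    HasSum f s := by
  have hsum : Summable f :=
    (summable_prod_of_nonneg hf).2 ⟨fun a => (hfib a).summable,
      hg.summable.congr fun a => ((hfib a).tsum_eq).symm⟩
  rw [hg.unique (hsum.hasSum.prod_fiberwise hfib)]
  exact hsum.hasSum

theorem hasSum_coe_add_three_mul_pow_add_two {x : ℝ} (hx : |x| < 1) :
    HasSum (fun M : ℕ => ((M : ℝ) + 3) * x ^ (M + 2)) (x ^ 2 * (3 - 2 * x) / (1 - x) ^ 2) := by
  have hx1 : 1 - x ≠ 0 := by linarith [le_abs_self x]
  have h := ((hasSum_coe_mul_geometric_of_norm_lt_one (by simpa using hx)).add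
    ((hasSum_geometric_of_abs_lt_one hx).mul_left 3)).mul_left (x ^ 2)
  rw [show x ^ 2 * (3 - 2 * x) / (1 - x) ^ 2 = x ^ 2 * (x / (1 - x) ^ 2 + 3 * (1 - x)⁻¹) by
    field_simp; ring]
  exact h.congr_fun fun M => by ring

theorem hasSum_pairs_two_five :
    HasSum (fun z : ℕ × ℕ => ((z.1 : ℝ) + 3) * ((z.2 : ℝ) + 3) * (2 ^ (z.1 + 2) * 5 ^ (z.2 + 2))⁻¹)
      ((13 / 40 : ℚ) : ℝ) := by
  have h2 : HasSum (fun M : ℕ => ((M : ℝ) + 3) * 2⁻¹ ^ (M + 2)) 2 := by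
    convert hasSum_coe_add_three_mul_pow_add_two (x := 2⁻¹) (by norm_num [abs_of_pos]) using 1
    norm_num
  have h5 : HasSum (fun N : ℕ => ((N : ℝ) + 3) * 5⁻¹ ^ (N + 2)) (13 / 80) := by
    convert hasSum_coe_add_three_mul_pow_add_two (x := 5⁻¹) (by norm_num [abs_of_pos]) using 1
    norm_num
  rw [show ((13 / 40 : ℚ) : ℝ) = 2 * (13 / 80) by norm_num]
  refine (h2.mul h5 (h2.summable.mul_of_nonneg h5.summable (fun _ => by positivity)
    (fun _ => by positivity))).congr_fun fun z => ?_
  simp only [inv_pow, mul_inv]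
  ring

def blockWeights (M N : ℕ) : Fin 4 → ℚ := ![1, M, M * N, N]

theorem sum_blockWeights (M N : ℕ) : ∑ j, blockWeights M N j = (1 + M) * (1 + N) := by
  simp [blockWeights, Fin.sum_univ_four]; ring

theorem blockWeights_pos {M N : ℕ} (hM : 0 < M) (hN : 0 < N) (j : Fin 4) :
    0 < blockWeights M N j := by
  fin_cases j <;> simp [blockWeights, hM, hN]

theorem blockWeights_nonneg (M N : ℕ) (j : Fin 4) : 0 ≤ blockWeights M N j := by
  fin_cases j <;> simp [blockWeights, mul_nonneg]

def blockSeq (p q : ℕ) (m n : ℕ → ℕ) (k : ℕ) : ℚ :=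
  let x := Nat.divModEquiv 4 k
  blockWeights (m x.1) (n x.1) x.2 * ((p : ℚ) ^ m x.1 * (q : ℚ) ^ n x.1)⁻¹

variable {p q : ℕ} {m n : ℕ → ℕ}

theorem blockSeq_divModEquiv_symm (x : ℕ × Fin 4) :
    blockSeq p q m n ((Nat.divModEquiv 4).symm x) =
      blockWeights (m x.1) (n x.1) x.2 * ((p : ℚ) ^ m x.1 * (q : ℚ) ^ n x.1)⁻¹ := by
  simp only [blockSeq, Equiv.apply_symm_apply]

theorem blockSeq_four_mul_add (i : ℕ) (j : Fin 4) :
    blockSeq p q m n (4 * i + j) =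
      blockWeights (m i) (n i) j * ((p : ℚ) ^ m i * (q : ℚ) ^ n i)⁻¹ := by
  simpa [mul_comm] using blockSeq_divModEquiv_symm (p := p) (q := q) (m := m) (n := n) (i, j)

theorem blockSeq_pos (hp : 0 < p) (hq : 0 < q) (hm : ∀ i, 0 < m i) (hn : ∀ i, 0 < n i) (k : ℕ) :
    0 < blockSeq p q m n k :=
  mul_pos (blockWeights_pos (hm _) (hn _) _) (by positivity)

theorem hasSum_blockSeq {s : ℝ}
    (h : HasSum (fun i => (1 + (m i : ℝ)) * (1 + n i) * ((p : ℝ) ^ m i * (q : ℝ) ^ n i)⁻¹) s) :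
    HasSum (fun k => (blockSeq p q m n k : ℝ)) s := by
  rw [← (Nat.divModEquiv 4).symm.hasSum_iff]
  refine hasSum_prod_of_fiberwise_of_nonneg (fun x => ?_) (fun i => hasSum_fintype _)
    (h.congr_fun fun i => ?_)
  · simp only [comp_apply, blockSeq_divModEquiv_symm, Pi.zero_apply, Rat.cast_nonneg]
    exact mul_nonneg (blockWeights_nonneg _ _ _) (by positivity)
  · simp only [comp_apply, blockSeq_divModEquiv_symm, ← Rat.cast_sum, ← Finset.sum_mul,
      sum_blockWeights]
    push_cast
    ring

theorem stmt6 :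
    ∃ (p q : ℕ), 1 < p ∧ 1 < q ∧
    ∃ (m n : ℕ → ℕ),
      (∀ i, 1 < m i ∧ 1 < n i) ∧
      (∀ M N : ℕ, 1 < M → 1 < N → ∃! i, m i = M ∧ n i = N) ∧
      StrictMono (fun i => p ^ m i * q ^ n i) ∧
      ∃ (a : ℕ → ℚ),
        (∀ i, a (4 * i) = ((p : ℚ) ^ m i * (q : ℚ) ^ n i)⁻¹ ∧
              a (4 * i + 1) = (m i : ℚ) * ((p : ℚ) ^ m i * (q : ℚ) ^ n i)⁻¹ ∧
              a (4 * i + 2) = (m i : ℚ) * (n i : ℚ) * ((p : ℚ) ^ m i * (q : ℚ) ^ n i)⁻¹ ∧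
              a (4 * i + 3) = (n i : ℚ) * ((p : ℚ) ^ m i * (q : ℚ) ^ n i)⁻¹) ∧
        (∀ k, 0 < a k) ∧
        ∃ aa : ℚ, 0 < aa ∧ aa < 1 ∧ HasSum (fun k => ((a k : ℝ))) (aa : ℝ) := by
  -- the pair `(M, N)` with `M, N > 1` is encoded as `(M - 2, N - 2)`
  have he : Injective fun z : ℕ × ℕ => 2 ^ (z.1 + 2) * 5 ^ (z.2 + 2) :=
    (Nat.prime_two.pow_mul_pow_injective Nat.prime_five (by norm_num)).comp
      (Prod.map_injective.2 ⟨add_left_injective 2, add_left_injective 2⟩)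
  obtain ⟨σ, hσ⟩ := exists_equiv_strictMono_comp he
  set m := fun i => (σ i).1 + 2
  set n := fun i => (σ i).2 + 2
  have hmn (i : ℕ) : 1 < m i ∧ 1 < n i := by simp only [m, n]; omega
  refine ⟨2, 5, by norm_num, by norm_num, m, n, hmn, fun M N hM hN => ?_, hσ, blockSeq 2 5 m n,
    fun i => ?_, blockSeq_pos (by norm_num) (by norm_num) (fun i => one_pos.trans (hmn i).1)
    (fun i => one_pos.trans (hmn i).2),
    13 / 40, by norm_num, by norm_num, hasSum_blockSeq ?_⟩
  · convert σ.bijective.existsUnique (M - 2, N - 2) using 2 with i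
    simp only [Prod.ext_iff, m, n]
    omega
  · have h (j : Fin 4) := blockSeq_four_mul_add (p := 2) (q := 5) (m := m) (n := n) i j
    exact ⟨by simpa [blockWeights] using h 0, by simpa [blockWeights] using h 1,
      by simpa [blockWeights] using h 2, by simpa [blockWeights] using h 3⟩
  · refine (σ.hasSum_iff.mpr hasSum_pairs_two_five).congr_fun fun i => ?_
    simp only [m, n, comp_apply]
    push_cast
    ring
end

section
/- Given a sequence (a_k)_{k≥1} of positive rationals as in the main construction (with parameters p, q and enumeration (m_i, n_i)), there exists a strictly decreasing sequence (b_k)_{k≥1} of positive rationals with 1 > b_1 > b_2 > ... such that ∑_{k=1}^∞ b_k a_k converges to a positive rational number b. -/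
/-!
Let `T k = s - ∑_{j<k} a j` be the remainders of the series `∑ a k = s`; they decrease
strictly to `0` and `a k = T k - T (k+1)`. Taking `b k = (T k + T (k+1)) / (2 s)` makes
`b k * a k = (T k ^ 2 - T (k+1) ^ 2) / (2 s)` telescope, so `∑ b k a k = T 0 ^ 2 / (2 s) = s / 2`,
which is rational as soon as `s` is.
-/

open Filter Topology Finset

theorem hasSum_sub_succ_of_antitone {f : ℕ → ℝ} {l : ℝ} (hf : Antitone f)
    (hl : Tendsto f atTop (𝓝 l)) : HasSum (fun k => f k - f (k + 1)) (f 0 - l) := by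
  refine (hasSum_iff_tendsto_nat_of_nonneg (fun k => sub_nonneg.2 (hf k.le_succ)) _).2 ?_
  simpa only [sum_range_sub'] using tendsto_const_nhds.sub hl

theorem forall_of_forall_four_mul_add {P : ℕ → Prop}
    (h : ∀ i, P (4 * i) ∧ P (4 * i + 1) ∧ P (4 * i + 2) ∧ P (4 * i + 3)) (k : ℕ) : P k := by
  obtain ⟨h0, h1, h2, h3⟩ := h (k / 4)
  have hk : k = 4 * (k / 4) ∨ k = 4 * (k / 4) + 1 ∨ k = 4 * (k / 4) + 2 ∨
      k = 4 * (k / 4) + 3 := by omega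
  rcases hk with hk | hk | hk | hk <;> rw [hk] <;> assumption

namespace SeriesTail

variable {a : ℕ → ℚ} {s : ℚ}

def tail (a : ℕ → ℚ) (s : ℚ) (k : ℕ) : ℚ := s - ∑ j ∈ range k, a j

theorem tail_zero : tail a s 0 = s := by
  simp [tail]

theorem tail_succ (k : ℕ) : tail a s (k + 1) = tail a s k - a k := by
  simp only [tail, sum_range_succ]
  ring

theorem strictAnti_tail (ha : ∀ k, 0 < a k) : StrictAnti (tail a s) :=
  strictAnti_nat_of_succ_lt fun k => by linarith [tail_succ (a := a) (s := s) k, ha k]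

theorem tail_pos (ha : ∀ k, 0 < a k) (hs : HasSum (fun k => (a k : ℝ)) s) (k : ℕ) :
    0 < tail a s k := by
  have hle : ∑ j ∈ range (k + 1), (a j : ℝ) ≤ s :=
    sum_le_hasSum _ (fun j _ => by exact_mod_cast (ha j).le) hs
  have hnonneg : (0 : ℝ) ≤ tail a s (k + 1) := by
    simpa [tail] using hle
  have : 0 ≤ tail a s (k + 1) := by exact_mod_cast hnonneg
  linarith [tail_succ (a := a) (s := s) k, ha k]

theorem tendsto_tail (hs : HasSum (fun k => (a k : ℝ)) s) :
    Tendsto (fun k => (tail a s k : ℝ)) atTop (𝓝 0) := by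
  simpa [tail] using (tendsto_const_nhds (x := (s : ℝ))).sub hs.tendsto_sum_nat

def tailWeight (a : ℕ → ℚ) (s : ℚ) (k : ℕ) : ℚ := (tail a s k + tail a s (k + 1)) / (2 * s)

theorem tailWeight_mul (k : ℕ) :
    tailWeight a s k * a k = tail a s k ^ 2 / (2 * s) - tail a s (k + 1) ^ 2 / (2 * s) := by
  rw [tailWeight, tail_succ]
  ring

theorem exists_strictAnti_hasSum_mul (ha : ∀ k, 0 < a k) (hs : HasSum (fun k => (a k : ℝ)) s) :
    ∃ b : ℕ → ℚ, (∀ k, 0 < b k) ∧ b 0 < 1 ∧ StrictAnti b ∧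
      ∃ bb : ℚ, 0 < bb ∧ HasSum (fun k => ((b k * a k : ℚ) : ℝ)) (bb : ℝ) := by
  have hT := tail_pos ha hs
  have hanti := strictAnti_tail (s := s) ha
  have hs0 : 0 < s := by simpa only [tail_zero] using hT 0
  refine ⟨tailWeight a s, fun k => div_pos (add_pos (hT k) (hT (k + 1))) (by positivity),
    ?_, ?_, s / 2, half_pos hs0, ?_⟩
  · rw [tailWeight, div_lt_one (by positivity)]
    linarith [hanti Nat.zero_lt_one, tail_zero (a := a) (s := s)]
  · exact fun i j hij => div_lt_div_of_pos_right (add_lt_add (hanti hij) (hanti (by omega)))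
      (by linarith)
  · let f : ℕ → ℝ := fun k => ((tail a s k ^ 2 / (2 * s) : ℚ) : ℝ)
    have hf : Antitone f := fun i j hij => by
      have := hanti.antitone hij
      have := (hT j).le
      simp only [f, Rat.cast_le]
      gcongr
    have hlim : Tendsto f atTop (𝓝 0) := by
      simpa [f] using ((tendsto_tail hs).pow 2).div_const ((2 * s : ℚ) : ℝ)
    convert hasSum_sub_succ_of_antitone hf hlim using 1
    · ext k
      simp only [f, tailWeight_mul, Rat.cast_sub]
    · simp only [f, tail_zero]
      push_cast
      field_simp
      ring

end SeriesTail

theorem stmt7_general (p q : ℕ) (hp : 1 < p) (hq : 1 < q)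
    (m n : ℕ → ℕ)
    (hmn : ∀ i, 1 < m i ∧ 1 < n i)
    (a : ℕ → ℚ)
    (hadef : ∀ i, a (4 * i) = ((p : ℚ) ^ m i * (q : ℚ) ^ n i)⁻¹ ∧
              a (4 * i + 1) = (m i : ℚ) * ((p : ℚ) ^ m i * (q : ℚ) ^ n i)⁻¹ ∧
              a (4 * i + 2) = (m i : ℚ) * (n i : ℚ) * ((p : ℚ) ^ m i * (q : ℚ) ^ n i)⁻¹ ∧
              a (4 * i + 3) = (n i : ℚ) * ((p : ℚ) ^ m i * (q : ℚ) ^ n i)⁻¹)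
    (aa : ℚ) (hasum : HasSum (fun k => ((a k : ℝ))) (aa : ℝ)) :
    ∃ b : ℕ → ℚ,
      (∀ k, 0 < b k) ∧ b 0 < 1 ∧ StrictAnti b ∧
      ∃ bb : ℚ, 0 < bb ∧ HasSum (fun k => ((b k * a k : ℚ) : ℝ)) (bb : ℝ) := by
  refine SeriesTail.exists_strictAnti_hasSum_mul (forall_of_forall_four_mul_add fun i => ?_) hasum
  have hp0 : (0 : ℚ) < p := by exact_mod_cast hp.trans' Nat.zero_lt_one
  have hq0 : (0 : ℚ) < q := by exact_mod_cast hq.trans' Nat.zero_lt_one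
  have hm0 : (0 : ℚ) < m i := by exact_mod_cast (hmn i).1.trans' Nat.zero_lt_one
  have hn0 : (0 : ℚ) < n i := by exact_mod_cast (hmn i).2.trans' Nat.zero_lt_one
  obtain ⟨h0, h1, h2, h3⟩ := hadef i
  rw [h0, h1, h2, h3]
  exact ⟨by positivity, by positivity, by positivity, by positivity⟩

theorem stmt7 (p q : ℕ) (hp : 1 < p) (hq : 1 < q) (hpq : Nat.Coprime p q)
    (m n : ℕ → ℕ)
    (hmn : ∀ i, 1 < m i ∧ 1 < n i)
    (henum : ∀ M N : ℕ, 1 < M → 1 < N → ∃! i, m i = M ∧ n i = N)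
    (hmono : StrictMono (fun i => p ^ m i * q ^ n i))
    (a : ℕ → ℚ)
    (hadef : ∀ i, a (4 * i) = ((p : ℚ) ^ m i * (q : ℚ) ^ n i)⁻¹ ∧
              a (4 * i + 1) = (m i : ℚ) * ((p : ℚ) ^ m i * (q : ℚ) ^ n i)⁻¹ ∧
              a (4 * i + 2) = (m i : ℚ) * (n i : ℚ) * ((p : ℚ) ^ m i * (q : ℚ) ^ n i)⁻¹ ∧
              a (4 * i + 3) = (n i : ℚ) * ((p : ℚ) ^ m i * (q : ℚ) ^ n i)⁻¹)
    (aa : ℚ) (haa : aa < 1) (hasum : HasSum (fun k => ((a k : ℝ))) (aa : ℝ)) :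
    ∃ b : ℕ → ℚ,
      (∀ k, 0 < b k) ∧ b 0 < 1 ∧ StrictAnti b ∧
      ∃ bb : ℚ, 0 < bb ∧ HasSum (fun k => ((b k * a k : ℚ) : ℝ)) (bb : ℝ) :=
  stmt7_general p q hp hq m n hmn a hadef aa hasum
end

section
/- In the normed space 𝕁 = K² with the norm whose unit disc is the set D of the construction, for all k ≥ 1 the vector v_{k+1} - v_k lies in the closed north-east quadrant and ‖v_{k+1} - v_k‖_𝕁 = ‖v_{k+1} - v_k‖₁ = a_k. -/
open Pointwise

/-- The cross product test: positive when `w` is on the left of the directed line from `p` to `r`. -/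
def cross {K : Type*} [Field K] [LinearOrder K] [IsStrictOrderedRing K] (p r w : K × K) : K :=
  (r.1 - p.1) * (w.2 - p.2) - (r.2 - p.2) * (w.1 - p.1)

/-- The closed half-plane bounded by the line through `p` and `r` that contains the origin
(assuming the origin is not on that line). -/
def halfPlane {K : Type*} [Field K] [LinearOrder K] [IsStrictOrderedRing K] (p r : K × K) : Set (K × K) :=
  {w | 0 ≤ cross p r w * cross p r (0, 0)}

/-- The unit disc `D` of the construction, determined by the vertices `v k`. -/
def discD {K : Type*} [Field K] [LinearOrder K] [IsStrictOrderedRing K] (v : ℕ → K × K) : Set (K × K) :=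
  (⋂ k, halfPlane (v k) (v (k + 1))) ∩ {w : K × K | w.2 ≤ 1} ∩ {w : K × K | w.1 + w.2 ≤ 1} ∩
    (⋂ k, -halfPlane (v k) (v (k + 1))) ∩ (-{w : K × K | w.2 ≤ 1}) ∩
    (-{w : K × K | w.1 + w.2 ≤ 1})

/-!
Each edge of the construction is `v (m + 2) - v (m + 1) = a m • (1 - b m, b m)`, and the
supporting value of its line is
`wedge (1 - b m, b m) (v (m + 1)) = 1 - (1 - b m) * bb + ∑ i < m, a i * (b i - b m)`.
This dominates `max (b m) (1 - b m)`: the sum is nonnegative because `b` decreases, and the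
tail estimate `bb - ∑ i < m, b i * a i ≤ b m * (aa - ∑ i < m, a i)` together with
`aa - bb ≤ 1` gives the other bound. Hence the `1`-ball lies in `D`, while `D ⊆ {x + y ≤ 1}`,
so on the north-east quadrant the gauge of `D` is the `1`-norm, and the edge
`a k • (1 - b k, b k)` has norm `a k`.
-/

open Finset

def wedge {R : Type*} [CommRing R] (x y : R × R) : R := x.1 * y.2 - x.2 * y.1

lemma wedge_smul_left {R : Type*} [CommRing R] (c : R) (d w : R × R) :
    wedge (c • d) w = c * wedge d w := by
  simp only [wedge, Prod.smul_fst, Prod.smul_snd, smul_eq_mul]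
  ring

section Geometry

variable {K : Type*} [Field K] [LinearOrder K] [IsStrictOrderedRing K]

lemma cross_eq_wedge_sub (p r w : K × K) :
    cross p r w = wedge (r - p) w - wedge (r - p) p := by
  simp only [cross, wedge, Prod.fst_sub, Prod.snd_sub]
  ring

lemma abs_wedge_le (d w : K × K) :
    |wedge d w| ≤ max |d.1| |d.2| * (|w.1| + |w.2|) :=
  calc |wedge d w| ≤ |d.1| * |w.2| + |d.2| * |w.1| := by
        simpa only [wedge, abs_mul] using abs_sub (d.1 * w.2) (d.2 * w.1)
    _ ≤ max |d.1| |d.2| * |w.2| + max |d.1| |d.2| * |w.1| := by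
        gcongr
        exacts [le_max_left _ _, le_max_right _ _]
    _ = max |d.1| |d.2| * (|w.1| + |w.2|) := by ring

lemma max_abs_smul {c : K} (hc : 0 ≤ c) (d : K × K) :
    max |(c • d).1| |(c • d).2| = c * max |d.1| |d.2| := by
  simp only [Prod.smul_fst, Prod.smul_snd, smul_eq_mul, abs_mul, abs_of_nonneg hc,
    mul_max_of_nonneg _ _ hc]

lemma mem_halfPlane_of_abs_add_abs_le_one {p r w : K × K}
    (hedge : max |(r - p).1| |(r - p).2| ≤ wedge (r - p) p) (hw : |w.1| + |w.2| ≤ 1) :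
    w ∈ halfPlane p r := by
  have hmax : 0 ≤ max |(r - p).1| |(r - p).2| := le_max_of_le_left (abs_nonneg _)
  have hwedge : |wedge (r - p) w| ≤ wedge (r - p) p :=
    ((abs_wedge_le _ _).trans (mul_le_of_le_one_right hmax hw)).trans hedge
  have hw0 : cross p r w ≤ 0 := by
    rw [cross_eq_wedge_sub]
    linarith [le_abs_self (wedge (r - p) w)]
  have h00 : cross p r (0, 0) ≤ 0 := by
    rw [cross_eq_wedge_sub]
    simp only [wedge, mul_zero, sub_self, zero_sub, neg_nonpos]
    exact (abs_nonneg _).trans hwedge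
  exact mul_nonneg_of_nonpos_of_nonpos hw0 h00

lemma mem_discD_of_abs_add_abs_le_one {v : ℕ → K × K}
    (hedge : ∀ j, max |(v (j + 1) - v j).1| |(v (j + 1) - v j).2| ≤
      wedge (v (j + 1) - v j) (v j))
    {w : K × K} (hw : |w.1| + |w.2| ≤ 1) : w ∈ discD v := by
  have hnw : |(-w).1| + |(-w).2| ≤ 1 := by simpa only [Prod.fst_neg, Prod.snd_neg, abs_neg]
  have h2 : |w.2| ≤ 1 := by linarith [abs_nonneg w.1]
  have h12 : |w.1 + w.2| ≤ 1 := (abs_add_le _ _).trans hw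
  refine ⟨⟨⟨⟨⟨?_, ?_⟩, ?_⟩, ?_⟩, ?_⟩, ?_⟩
  · exact Set.mem_iInter.2 fun j => mem_halfPlane_of_abs_add_abs_le_one (hedge j) hw
  · exact (le_abs_self _).trans h2
  · exact (le_abs_self _).trans h12
  · exact Set.mem_iInter.2 fun j =>
      Set.mem_neg.2 (mem_halfPlane_of_abs_add_abs_le_one (hedge j) hnw)
  · exact (neg_le_abs _).trans h2
  · show -w.1 + -w.2 ≤ 1
    linarith [neg_le_abs (w.1 + w.2)]

lemma add_le_one_of_mem_discD {v : ℕ → K × K} {d : K × K} (hd : d ∈ discD v) :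
    d.1 + d.2 ≤ 1 :=
  hd.1.1.1.2

lemma eq_fst_add_snd_of_isLeast {D : Set (K × K)}
    (hball : ∀ w : K × K, |w.1| + |w.2| ≤ 1 → w ∈ D) (hD : ∀ d ∈ D, d.1 + d.2 ≤ 1)
    {u : K × K} (hu₁ : 0 ≤ u.1) (hu₂ : 0 ≤ u.2) {n : K}
    (hn : IsLeast {s | 0 ≤ s ∧ u ∈ s • D} n) : n = u.1 + u.2 := by
  have hc : 0 ≤ u.1 + u.2 := add_nonneg hu₁ hu₂
  have hmem : u ∈ (u.1 + u.2) • D := by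
    rcases hc.eq_or_lt with hc | hc
    · have hu : u = 0 := Prod.ext (by simp only [Prod.fst_zero]; linarith)
        (by simp only [Prod.snd_zero]; linarith)
      exact ⟨0, hball 0 (by simp), by simp [hu]⟩
    · refine ⟨(u.1 + u.2)⁻¹ • u, hball _ ?_, smul_inv_smul₀ hc.ne' u⟩
      have hinv : 0 ≤ (u.1 + u.2)⁻¹ := inv_nonneg.2 hc.le
      simp only [Prod.smul_fst, Prod.smul_snd, smul_eq_mul, abs_mul, abs_of_nonneg hinv,
        abs_of_nonneg hu₁, abs_of_nonneg hu₂, ← mul_add, inv_mul_cancel₀ hc.ne', le_refl]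
  refine le_antisymm (hn.2 ⟨hc, hmem⟩) ?_
  obtain ⟨⟨hn0, d, hd, rfl⟩, -⟩ := hn
  simpa only [Prod.smul_fst, Prod.smul_snd, smul_eq_mul, ← mul_add]
    using mul_le_of_le_one_right hn0 (hD d hd)

end Geometry

lemma sub_sum_range_le_mul_sub_sum_range {f g : ℕ → ℝ} {A B : ℝ} (hf : HasSum f A)
    (hgf : HasSum (fun n => g n * f n) B) (hf0 : ∀ n, 0 ≤ f n) (hg : Antitone g) (m : ℕ) :
    B - ∑ i ∈ range m, g i * f i ≤ g m * (A - ∑ i ∈ range m, f i) :=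
  hasSum_le (fun n => mul_le_mul_of_nonneg_right (hg (Nat.le_add_left m n)) (hf0 _))
    ((hasSum_nat_add_iff' m).2 hgf) (((hasSum_nat_add_iff' m).2 hf).mul_left (g m))

lemma eq_add_sum_range_of_succ_succ {M : Type*} [AddCommMonoid M] {v d : ℕ → M}
    (h : ∀ k, v (k + 2) = v (k + 1) + d k) (m : ℕ) : v (m + 1) = v 1 + ∑ i ∈ range m, d i := by
  induction m with
  | zero => simp
  | succ m ih => rw [h, ih, sum_range_succ, add_assoc]

def edgeDir {R : Type*} [CommRing R] (β : R) : R × R := (1 - β, β)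

lemma wedge_edgeDir_vertex {R : Type*} [CommRing R] (α β : ℕ → R) (B : R) (m : ℕ) :
    wedge (edgeDir (β m)) ((-1, 1 - B) + ∑ i ∈ range m, α i • edgeDir (β i)) =
      1 - (1 - β m) * B + ∑ i ∈ range m, β i * α i - β m * ∑ i ∈ range m, α i := by
  simp only [wedge, edgeDir, Prod.fst_add, Prod.snd_add, Prod.fst_sum, Prod.snd_sum,
    Prod.smul_fst, Prod.smul_snd, smul_eq_mul, mul_sub, mul_one, sum_sub_distrib]
  simp only [mul_comm (α _) (β _)]
  ring

section Construction

variable {K : Type*} [Field K] [LinearOrder K] [IsStrictOrderedRing K]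

lemma max_abs_edgeDir_le_wedge_vertex {α β : ℕ → K} {A B : K}
    (hα : ∀ i, 0 ≤ α i) (hβ₀ : ∀ i, 0 ≤ β i) (hβ₁ : ∀ i, β i ≤ 1) (hβ : Antitone β)
    (hB : B ≤ 1) (hAB : A - B ≤ 1)
    (htail : ∀ m, B - ∑ i ∈ range m, β i * α i ≤ β m * (A - ∑ i ∈ range m, α i)) (m : ℕ) :
    max |(edgeDir (β m)).1| |(edgeDir (β m)).2| ≤
      wedge (edgeDir (β m)) ((-1, 1 - B) + ∑ i ∈ range m, α i • edgeDir (β i)) := by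
  have hmono : β m * ∑ i ∈ range m, α i ≤ ∑ i ∈ range m, β i * α i := by
    rw [mul_sum]
    exact sum_le_sum fun i hi => mul_le_mul_of_nonneg_right (hβ (mem_range.1 hi).le) (hα i)
  rw [wedge_edgeDir_vertex, edgeDir, abs_of_nonneg (sub_nonneg.2 (hβ₁ m)),
    abs_of_nonneg (hβ₀ m)]
  refine max_le ?_ ?_
  · nlinarith [htail m, mul_le_mul_of_nonneg_left hAB (hβ₀ m)]
  · nlinarith [mul_le_mul_of_nonneg_left hB (sub_nonneg.2 (hβ₁ m))]

lemma mem_discD_of_abs_add_abs_le_one_of_succ_succ {α β : ℕ → K} {A B : K}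
    (hα : ∀ i, 0 ≤ α i) (hβ₀ : ∀ i, 0 ≤ β i) (hβ₁ : ∀ i, β i ≤ 1) (hβ : Antitone β)
    (hB : B ≤ 1) (hAB : A - B ≤ 1)
    (htail : ∀ m, B - ∑ i ∈ range m, β i * α i ≤ β m * (A - ∑ i ∈ range m, α i))
    {v : ℕ → K × K} (hv0 : v 0 = (-1, 0)) (hv1 : v 1 = (-1, 1 - B))
    (hvrec : ∀ k, v (k + 2) = v (k + 1) + α k • edgeDir (β k))
    {w : K × K} (hw : |w.1| + |w.2| ≤ 1) : w ∈ discD v := by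
  refine mem_discD_of_abs_add_abs_le_one (fun j => ?_) hw
  rcases j with _ | m
  · simp only [zero_add, hv0, hv1, wedge, Prod.fst_sub, Prod.snd_sub]
    simp [abs_of_nonneg (sub_nonneg.2 hB), hB]
  · rw [hvrec, add_sub_cancel_left, max_abs_smul (hα m), wedge_smul_left,
      eq_add_sum_range_of_succ_succ hvrec, hv1]
    exact mul_le_mul_of_nonneg_left
      (max_abs_edgeDir_le_wedge_vertex hα hβ₀ hβ₁ hβ hB hAB htail m) (hα m)

end Construction

theorem stmt12 {K : Type*} [Field K] [LinearOrder K] [IsStrictOrderedRing K]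
    (a b : ℕ → ℚ) (aa bb : ℚ)
    (ha : ∀ k, 0 < a k)
    (hb0 : ∀ k, 0 < b k) (hb1 : b 0 < 1) (hbanti : StrictAnti b)
    (hasum : HasSum (fun k => ((a k : ℝ))) (aa : ℝ)) (haa : aa < 1)
    (hbsum : HasSum (fun k => ((b k * a k : ℚ) : ℝ)) (bb : ℝ))
    (hab : aa - bb - 1 < 0)
    (v : ℕ → K × K)
    (hv0 : v 0 = (-1, 0))
    (hv1 : v 1 = (-1, 1 - (bb : K)))
    (hvrec : ∀ k, v (k + 2) = v (k + 1) + ((((1 - b k) * a k : ℚ) : K), ((b k * a k : ℚ) : K)))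
    (N : K × K → K)
    (hN : ∀ u : K × K, 0 ≤ N u ∧ u ∈ N u • discD v ∧
      ∀ s : K, 0 ≤ s → s < N u → u ∉ s • discD v) :
    ∀ k : ℕ,
      0 ≤ (v (k + 2) - v (k + 1)).1 ∧ 0 ≤ (v (k + 2) - v (k + 1)).2 ∧
      N (v (k + 2) - v (k + 1))
        = |(v (k + 2) - v (k + 1)).1| + |(v (k + 2) - v (k + 1)).2| ∧
      N (v (k + 2) - v (k + 1)) = ((a k : ℚ) : K) := by
  have hb_lt_one : ∀ m, b m < 1 := fun m => (hbanti.antitone m.zero_le).trans_lt hb1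
  have htail : ∀ m, bb - ∑ i ∈ range m, b i * a i ≤ b m * (aa - ∑ i ∈ range m, a i) := by
    intro m
    push_cast at hbsum
    exact_mod_cast sub_sum_range_le_mul_sub_sum_range hasum hbsum
      (fun n => by exact_mod_cast (ha n).le)
      (fun i j hij => by simpa using hbanti.antitone hij) m
  have hbb : bb < 1 := by
    have := htail 0
    simp only [range_zero, sum_empty, sub_zero] at this
    nlinarith [hb0 0]
  have hvrec' : ∀ k, v (k + 2) = v (k + 1) + (a k : K) • edgeDir (b k : K) := by
    intro k
    rw [hvrec]
    congr 1
    ext <;> simp only [edgeDir, Prod.smul_fst, Prod.smul_snd, smul_eq_mul] <;> push_cast <;>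
      ring
  have hball : ∀ w : K × K, |w.1| + |w.2| ≤ 1 → w ∈ discD v := fun w hw =>
    mem_discD_of_abs_add_abs_le_one_of_succ_succ (A := (aa : K))
      (fun i => by exact_mod_cast (ha i).le) (fun i => by exact_mod_cast (hb0 i).le)
      (fun i => by exact_mod_cast (hb_lt_one i).le)
      (fun i j hij => by exact_mod_cast hbanti.antitone hij)
      (by exact_mod_cast hbb.le) (by exact_mod_cast (by linarith : aa - bb ≤ 1))
      (fun m => by exact_mod_cast htail m) hv0 hv1 hvrec' hw
  intro k
  rw [hvrec', add_sub_cancel_left]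
  have hu₁ : 0 ≤ ((a k : K) • edgeDir (b k : K)).1 := by
    simp only [edgeDir, Prod.smul_fst, smul_eq_mul]
    exact_mod_cast (mul_pos (ha k) (sub_pos.2 (hb_lt_one k))).le
  have hu₂ : 0 ≤ ((a k : K) • edgeDir (b k : K)).2 := by
    simp only [edgeDir, Prod.smul_snd, smul_eq_mul]
    exact_mod_cast (mul_pos (ha k) (hb0 k)).le
  have hnorm := eq_fst_add_snd_of_isLeast hball (fun d => add_le_one_of_mem_discD) hu₁ hu₂
    (n := N _) ⟨⟨(hN _).1, (hN _).2.1⟩,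
      fun s hs => not_lt.1 fun hlt => (hN _).2.2 s hs.1 hlt hs.2⟩
  refine ⟨hu₁, hu₂, by rw [abs_of_nonneg hu₁, abs_of_nonneg hu₂, hnorm], ?_⟩
  rw [hnorm]
  simp only [edgeDir, Prod.smul_fst, Prod.smul_snd, smul_eq_mul]
  ring
end

section
/- In the normed space 𝕁 of the construction, ‖e₂ - e₁‖_𝕁 > 1, i.e. the vector (−1, 1) does not lie in the unit disc D. -/
open Pointwise

/-!
The first edge of `D` runs from `v 1 = (-1, 1 - bb)` in the direction `((1 - b₀) a₀, b₀ a₀)`.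
Since `0 < bb < 1` (as `0 < b k ≤ b 0 < 1` and `∑ a k < 1`), the line through it separates the
origin from every point `(-t, t)` with `t ≥ 1`. Hence no such point lies in `D`, and so the gauge
of `(-1, 1)` exceeds `1`.
-/

theorem hasSum_mul_mem_Ioo {ι : Type*} [Nonempty ι] {a b : ι → ℝ} {sa sb : ℝ}
    (ha : ∀ i, 0 < a i) (hb₀ : ∀ i, 0 < b i) (hb₁ : ∀ i, b i ≤ 1)
    (hsa : HasSum a sa) (hsa₁ : sa < 1) (hsb : HasSum (fun i => b i * a i) sb) :
    sb ∈ Set.Ioo 0 1 := by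
  obtain ⟨i⟩ := ‹Nonempty ι›
  have hpos : 0 < sb :=
    hasSum_lt (fun j => (mul_pos (hb₀ j) (ha j)).le) (mul_pos (hb₀ i) (ha i)) hasSum_zero hsb
  have hle : sb ≤ sa :=
    hasSum_le (fun j => mul_le_of_le_one_left (ha j).le (hb₁ j)) hsb hsa
  exact ⟨hpos, hle.trans_lt hsa₁⟩

section Plane

variable {K : Type*} [Field K] [LinearOrder K] [IsStrictOrderedRing K]

theorem discD_subset_halfPlane (v : ℕ → K × K) (k : ℕ) :
    discD v ⊆ halfPlane (v k) (v (k + 1)) :=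
  fun _ hw => Set.mem_iInter.mp hw.1.1.1.1.1 k

theorem not_mem_halfPlane_of_cross_pos {p r w : K × K} (hw : 0 < cross p r w)
    (h₀ : cross p r (0, 0) < 0) : w ∉ halfPlane p r :=
  fun h => (mul_neg_of_pos_of_neg hw h₀).not_ge h

theorem cross_antidiag (A B C t : K) :
    cross (-1, 1 - C) ((-1, 1 - C) + ((1 - B) * A, B * A)) (-t, t) =
      A * (t - 1 + (1 - B) * C) := by
  simp only [cross, Prod.fst_add, Prod.snd_add]
  ring

theorem cross_origin (A B C : K) :
    cross (-1, 1 - C) ((-1, 1 - C) + ((1 - B) * A, B * A)) (0, 0) =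
      A * ((1 - B) * C - 1) := by
  simp only [cross, Prod.fst_add, Prod.snd_add]
  ring

theorem antidiag_not_mem_halfPlane {A B C t : K} (hA : 0 < A) (hB₀ : 0 ≤ B) (hB₁ : B < 1)
    (hC₀ : 0 < C) (hC₁ : C < 1) (ht : 1 ≤ t) :
    (-t, t) ∉ halfPlane (-1, 1 - C) ((-1, 1 - C) + ((1 - B) * A, B * A)) := by
  have hBC : 0 < (1 - B) * C := mul_pos (sub_pos.mpr hB₁) hC₀
  have hBC₁ : (1 - B) * C < 1 := by nlinarith
  refine not_mem_halfPlane_of_cross_pos ?_ ?_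
  · rw [cross_antidiag]
    exact mul_pos hA (by linarith)
  · rw [cross_origin]
    exact mul_neg_of_pos_of_neg hA (by linarith)

end Plane

theorem one_lt_of_mem_smul_set {K V : Type*} [Field K] [LinearOrder K] [IsStrictOrderedRing K]
    [AddCommGroup V] [Module K V] {S : Set V} {u : V} {c : K} (hu : u ≠ 0)
    (hS : ∀ t : K, 1 ≤ t → t • u ∉ S) (hc : 0 ≤ c) (huc : u ∈ c • S) : 1 < c := by
  have hc₀ : c ≠ 0 := by
    rintro rfl
    exact hu (Set.zero_smul_set_subset S huc)
  by_contra! hc₁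
  exact hS c⁻¹ (one_le_inv₀ (hc.lt_of_ne' hc₀) |>.mpr hc₁)
    ((Set.mem_smul_set_iff_inv_smul_mem₀ hc₀ S u).mp huc)

theorem stmt13_general {K : Type*} [Field K] [LinearOrder K] [IsStrictOrderedRing K]
    (a b : ℕ → ℚ) (aa bb : ℚ)
    (ha : ∀ k, 0 < a k)
    (hb0 : ∀ k, 0 < b k) (hb1 : b 0 < 1) (hbanti : StrictAnti b)
    (hasum : HasSum (fun k => ((a k : ℝ))) (aa : ℝ)) (haa : aa < 1)
    (hbsum : HasSum (fun k => ((b k * a k : ℚ) : ℝ)) (bb : ℝ))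
    (v : ℕ → K × K)
    (hv1 : v 1 = (-1, 1 - (bb : K)))
    (hvrec : ∀ k, v (k + 2) = v (k + 1) + ((((1 - b k) * a k : ℚ) : K), ((b k * a k : ℚ) : K)))
    (N : K × K → K)
    (hN : ∀ u : K × K, 0 ≤ N u ∧ u ∈ N u • discD v ∧
      ∀ s : K, 0 ≤ s → s < N u → u ∉ s • discD v) :
    ((-1, 1) : K × K) ∉ discD v ∧ 1 < N (((0, 1) : K × K) - ((1, 0) : K × K)) := by
  obtain ⟨hbb₀, hbb₁⟩ : (bb : ℝ) ∈ Set.Ioo 0 1 := by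
    refine hasSum_mul_mem_Ioo (b := fun k => (b k : ℝ)) (fun k => by exact_mod_cast ha k)
      (fun k => by exact_mod_cast hb0 k) (fun k => ?_) hasum (by exact_mod_cast haa)
      (by exact_mod_cast hbsum)
    exact_mod_cast (hbanti.antitone (Nat.zero_le k)).trans hb1.le
  have hbbK₀ : (0 : K) < bb := by exact_mod_cast (by exact_mod_cast hbb₀ : 0 < bb)
  have hbbK₁ : (bb : K) < 1 := by exact_mod_cast (by exact_mod_cast hbb₁ : bb < 1)
  have hout : ∀ t : K, 1 ≤ t → ((-t, t) : K × K) ∉ discD v := by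
    intro t ht hmem
    have := discD_subset_halfPlane v 1 hmem
    rw [hvrec 0, hv1] at this
    push_cast at this
    exact antidiag_not_mem_halfPlane (by exact_mod_cast ha 0) (by exact_mod_cast (hb0 0).le)
      (by exact_mod_cast hb1) hbbK₀ hbbK₁ ht this
  refine ⟨hout 1 le_rfl, one_lt_of_mem_smul_set ?_ ?_ (hN _).1 (hN _).2.1⟩
  · simp [Prod.ext_iff]
  · intro t ht
    simpa using hout t ht

theorem stmt13 {K : Type*} [Field K] [LinearOrder K] [IsStrictOrderedRing K]
    (a b : ℕ → ℚ) (aa bb : ℚ)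
    (ha : ∀ k, 0 < a k)
    (hb0 : ∀ k, 0 < b k) (hb1 : b 0 < 1) (hbanti : StrictAnti b)
    (hasum : HasSum (fun k => ((a k : ℝ))) (aa : ℝ)) (haa : aa < 1)
    (hbsum : HasSum (fun k => ((b k * a k : ℚ) : ℝ)) (bb : ℝ))
    (hab : aa - bb - 1 < 0)
    (v : ℕ → K × K)
    (hv0 : v 0 = (-1, 0))
    (hv1 : v 1 = (-1, 1 - (bb : K)))
    (hvrec : ∀ k, v (k + 2) = v (k + 1) + ((((1 - b k) * a k : ℚ) : K), ((b k * a k : ℚ) : K)))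
    (N : K × K → K)
    (hN : ∀ u : K × K, 0 ≤ N u ∧ u ∈ N u • discD v ∧
      ∀ s : K, 0 ≤ s → s < N u → u ∉ s • discD v) :
    ((-1, 1) : K × K) ∉ discD v ∧ 1 < N (((0, 1) : K × K) - ((1, 0) : K × K)) :=
  stmt13_general a b aa bb ha hb0 hb1 hbanti hasum haa hbsum v hv1 hvrec N hN
end

section
/- The intersection of the disc D of the construction with the closed north-east quadrant of K² is the triangle with vertices 0, e₁, e₂, i.e. {(x, y) | x ≥ 0, y ≥ 0, x + y ≤ 1}. -/
open Pointwise

/-!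
Every edge of `D` lies on a line whose half-plane through the origin contains the
`ℓ¹` unit ball `{|x| + |y| ≤ 1}`: for an edge from `p` to `p + d` this holds as soon as
`|d.1|` and `|d.2|` are at most `|cross p (p + d) 0|`. For the first edge this is an identity;
for the edge from `v (n + 1)` in direction `a n • (1 - b n, b n)` it reduces to
`(1 - b n) * (bb - T n) + b n * U n ≤ b n * (1 - b n)`, with `T n`, `U n` the partial sums of
`b k * a k`, `(1 - b k) * a k`. Since `b` decreases, the tail `bb - T n` is at most
`b n * (aa - S n)` and `U n` at most `(1 - b n) * S n`, where `S n` is the partial sum of `a`,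
so the left side is at most `b n * (1 - b n) * aa`. Hence `D` contains the `ℓ¹` ball, and the
ball meets the closed quadrant exactly in the triangle, which in turn contains
`D ∩ quadrant` because of the constraint `x + y ≤ 1`.
-/

open Finset

section Series

variable {α β : ℕ → ℝ} {A B : ℝ}

lemma sub_sum_range_mul_le_mul_sub_sum_range (hα : ∀ k, 0 ≤ α k) (hβ : Antitone β)
    (hA : HasSum α A) (hB : HasSum (fun k => β k * α k) B) (n : ℕ) :
    B - ∑ k ∈ range n, β k * α k ≤ β n * (A - ∑ k ∈ range n, α k) :=
  hasSum_le (fun k => mul_le_mul_of_nonneg_right (hβ (Nat.le_add_left n k)) (hα _))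
    ((hasSum_nat_add_iff' n).mpr hB) (((hasSum_nat_add_iff' n).mpr hA).mul_left (β n))

lemma sum_range_one_sub_mul_le (hα : ∀ k, 0 ≤ α k) (hβ : Antitone β) (n : ℕ) :
    ∑ k ∈ range n, (1 - β k) * α k ≤ (1 - β n) * ∑ k ∈ range n, α k := by
  rw [mul_sum]
  exact sum_le_sum fun k hk =>
    mul_le_mul_of_nonneg_right (by linarith [hβ (mem_range.mp hk).le]) (hα k)

lemma one_sub_mul_tail_add_mul_head_le (hα : ∀ k, 0 ≤ α k) (hβ : Antitone β) {n : ℕ}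
    (hβ₀ : 0 ≤ β n) (hβ₁ : β n ≤ 1) (hA : HasSum α A) (hA₁ : A ≤ 1)
    (hB : HasSum (fun k => β k * α k) B) :
    (1 - β n) * (B - ∑ k ∈ range n, β k * α k) + β n * ∑ k ∈ range n, (1 - β k) * α k
      ≤ β n * (1 - β n) := by
  have hβ₁' : 0 ≤ 1 - β n := sub_nonneg.mpr hβ₁
  calc (1 - β n) * (B - ∑ k ∈ range n, β k * α k) + β n * ∑ k ∈ range n, (1 - β k) * α k
      ≤ (1 - β n) * (β n * (A - ∑ k ∈ range n, α k))
          + β n * ((1 - β n) * ∑ k ∈ range n, α k) := by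
        gcongr
        exacts [sub_sum_range_mul_le_mul_sub_sum_range hα hβ hA hB n,
          sum_range_one_sub_mul_le hα hβ n]
    _ = β n * (1 - β n) * A := by ring
    _ ≤ β n * (1 - β n) := mul_le_of_le_one_right (mul_nonneg hβ₀ hβ₁') hA₁

end Series

section HalfPlane

variable {K : Type*} [Field K] [LinearOrder K] [IsStrictOrderedRing K]

lemma add_mul_self_nonneg_of_abs_le {c e : K} (h : |e| ≤ |c|) : 0 ≤ (c + e) * c := by
  nlinarith [abs_mul_abs_self c, neg_abs_le (e * c), abs_mul e c, abs_nonneg c]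

lemma mem_halfPlane_add_of_abs_add_abs_le_one {p d w : K × K}
    (hd : max |d.1| |d.2| ≤ |cross p (p + d) 0|) (hw : |w.1| + |w.2| ≤ 1) :
    w ∈ halfPlane p (p + d) := by
  set c := cross p (p + d) 0
  have hcross : cross p (p + d) w = c + (d.1 * w.2 - d.2 * w.1) := by
    simp only [c, cross, Prod.fst_add, Prod.snd_add, Prod.fst_zero, Prod.snd_zero]
    ring
  have hle : |d.1 * w.2 - d.2 * w.1| ≤ |c| :=
    calc |d.1 * w.2 - d.2 * w.1| ≤ |d.1| * |w.2| + |d.2| * |w.1| := by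
          rw [← abs_mul, ← abs_mul]; exact abs_sub _ _
      _ ≤ |c| * |w.2| + |c| * |w.1| :=
          add_le_add (mul_le_mul_of_nonneg_right (le_of_max_le_left hd) (abs_nonneg _))
            (mul_le_mul_of_nonneg_right (le_of_max_le_right hd) (abs_nonneg _))
      _ ≤ |c| := by nlinarith [abs_nonneg c]
  show 0 ≤ cross p (p + d) w * c
  rw [hcross]
  exact add_mul_self_nonneg_of_abs_le hle

lemma setOf_abs_add_abs_le_one_subset_discD {v : ℕ → K × K}
    (h : ∀ k w, |w.1| + |w.2| ≤ 1 → w ∈ halfPlane (v k) (v (k + 1))) :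
    {w : K × K | |w.1| + |w.2| ≤ 1} ⊆ discD v := by
  intro w (hw : |w.1| + |w.2| ≤ 1)
  have hw' : |(-w).1| + |(-w).2| ≤ 1 := by simpa using hw
  have h₁ := neg_abs_le w.1
  have h₂ := neg_abs_le w.2
  have h₃ := le_abs_self w.1
  have h₄ := le_abs_self w.2
  simp only [discD, Set.mem_inter_iff, Set.mem_iInter, Set.mem_neg, Set.mem_ofPred_eq,
    Prod.fst_neg, Prod.snd_neg]
  exact ⟨⟨⟨⟨⟨fun k => h k w hw, by linarith⟩, by linarith⟩, fun k => h k (-w) hw'⟩,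
    by linarith⟩, by linarith⟩

lemma discD_subset_setOf_add_le_one (v : ℕ → K × K) :
    discD v ⊆ {w : K × K | w.1 + w.2 ≤ 1} :=
  fun _ hw => hw.1.1.1.2

lemma max_abs_le_abs_cross {p d : K × K} {a b s t : K} (hp : p = (-1 + s, 1 - t))
    (hd : d = ((1 - b) * a, b * a)) (ha : 0 ≤ a) (hb₀ : 0 ≤ b) (hb₁ : b ≤ 1)
    (h : (1 - b) * t + b * s ≤ b * (1 - b)) :
    max |d.1| |d.2| ≤ |cross p (p + d) 0| := by
  subst hp hd
  have hc : cross (-1 + s, 1 - t) ((-1 + s, 1 - t) + ((1 - b) * a, b * a)) 0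
      = -(a * (1 - b * s - (1 - b) * t)) := by
    simp only [cross, Prod.fst_add, Prod.snd_add, Prod.fst_zero, Prod.snd_zero]
    ring
  have h₁ : 1 - b ≤ 1 - b * s - (1 - b) * t := by nlinarith [sq_nonneg b]
  have h₂ : b ≤ 1 - b * s - (1 - b) * t := by nlinarith [sq_nonneg (1 - b)]
  rw [hc, abs_neg, abs_of_nonneg (mul_nonneg ha (hb₀.trans h₂)),
    abs_of_nonneg (mul_nonneg (sub_nonneg.mpr hb₁) ha), abs_of_nonneg (mul_nonneg hb₀ ha)]
  exact max_le ((mul_le_mul_of_nonneg_right h₁ ha).trans_eq (mul_comm _ _))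
    ((mul_le_mul_of_nonneg_right h₂ ha).trans_eq (mul_comm _ _))

end HalfPlane

theorem stmt15_general {K : Type*} [Field K] [LinearOrder K] [IsStrictOrderedRing K]
    (a b : ℕ → ℚ) (aa bb : ℚ)
    (ha : ∀ k, 0 < a k)
    (hb0 : ∀ k, 0 < b k) (hb1 : b 0 < 1) (hbanti : StrictAnti b)
    (hasum : HasSum (fun k => ((a k : ℝ))) (aa : ℝ)) (haa : aa < 1)
    (hbsum : HasSum (fun k => ((b k * a k : ℚ) : ℝ)) (bb : ℝ))
    (v : ℕ → K × K)
    (hv0 : v 0 = (-1, 0))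
    (hv1 : v 1 = (-1, 1 - (bb : K)))
    (hvrec : ∀ k, v (k + 2) = v (k + 1) + ((((1 - b k) * a k : ℚ) : K), ((b k * a k : ℚ) : K))) :
    discD v ∩ {w : K × K | 0 ≤ w.1 ∧ 0 ≤ w.2}
      = {w : K × K | 0 ≤ w.1 ∧ 0 ≤ w.2 ∧ w.1 + w.2 ≤ 1} := by
  set T : ℕ → ℚ := fun n => ∑ k ∈ range n, b k * a k
  set U : ℕ → ℚ := fun n => ∑ k ∈ range n, (1 - b k) * a k
  have hv : ∀ n, v (n + 1) = (-1 + ((U n : ℚ) : K), 1 - ((bb - T n : ℚ) : K)) := by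
    intro n
    induction n with
    | zero => simp [hv1, T, U]
    | succ n ih =>
      rw [hvrec, ih]
      simp only [T, U, sum_range_succ]
      ext <;> simp only [Prod.fst_add, Prod.snd_add] <;> push_cast <;> ring
  have hb_le : ∀ n, b n ≤ 1 := fun n => (hbanti.antitone n.zero_le).trans hb1.le
  have htail : ∀ n, (1 - b n) * (bb - T n) + b n * U n ≤ b n * (1 - b n) := fun n => by
    exact_mod_cast one_sub_mul_tail_add_mul_head_le (β := fun k => (b k : ℝ)) (n := n)
      (B := bb)      (fun k => by exact_mod_cast (ha k).le)
      (fun i j hij => Rat.cast_le.mpr (hbanti.antitone hij)) (by exact_mod_cast (hb0 n).le)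
      (by exact_mod_cast hb_le n) hasum (by exact_mod_cast haa.le)
      (by simpa only [Rat.cast_mul] using hbsum)
  have hedges : ∀ k w, |w.1| + |w.2| ≤ 1 → w ∈ halfPlane (v k) (v (k + 1)) := by
    rintro (_ | n) w hw
    · have h : v 1 = v 0 + (0, 1 - (bb : K)) := by simp [hv0, hv1]
      refine h ▸ mem_halfPlane_add_of_abs_add_abs_le_one ?_ hw
      simp [hv0, cross, abs_sub_comm]
    · rw [hvrec]
      exact mem_halfPlane_add_of_abs_add_abs_le_one (max_abs_le_abs_cross (hv n)
        (by push_cast; rfl) (by exact_mod_cast (ha n).le) (by exact_mod_cast (hb0 n).le)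
        (by exact_mod_cast hb_le n) (by exact_mod_cast htail n)) hw
  apply Set.Subset.antisymm
  · rintro w ⟨hD, hx, hy⟩
    exact ⟨hx, hy, discD_subset_setOf_add_le_one v hD⟩
  · rintro w ⟨hx, hy, hxy⟩
    refine ⟨setOf_abs_add_abs_le_one_subset_discD hedges ?_, hx, hy⟩
    simpa [abs_of_nonneg hx, abs_of_nonneg hy] using hxy

theorem stmt15 {K : Type*} [Field K] [LinearOrder K] [IsStrictOrderedRing K]
    (a b : ℕ → ℚ) (aa bb : ℚ)
    (ha : ∀ k, 0 < a k)
    (hb0 : ∀ k, 0 < b k) (hb1 : b 0 < 1) (hbanti : StrictAnti b)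
    (hasum : HasSum (fun k => ((a k : ℝ))) (aa : ℝ)) (haa : aa < 1)
    (hbsum : HasSum (fun k => ((b k * a k : ℚ) : ℝ)) (bb : ℝ))
    (hab : aa - bb - 1 < 0)
    (v : ℕ → K × K)
    (hv0 : v 0 = (-1, 0))
    (hv1 : v 1 = (-1, 1 - (bb : K)))
    (hvrec : ∀ k, v (k + 2) = v (k + 1) + ((((1 - b k) * a k : ℚ) : K), ((b k * a k : ℚ) : K))) :
    discD v ∩ {w : K × K | 0 ≤ w.1 ∧ 0 ≤ w.2}
      = {w : K × K | 0 ≤ w.1 ∧ 0 ≤ w.2 ∧ w.1 + w.2 ≤ 1} :=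
  stmt15_general a b aa bb ha hb0 hb1 hbanti hasum haa hbsum v hv0 hv1 hvrec
end

section
/- Let V = X × W be the 1-sum of two normed spaces over an ordered field K, with norm ‖(v, w)‖ = ‖v‖_X + ‖w‖_W. Then a point (v, w) with ‖(v,w)‖ = r > 0 is an extreme point of the sphere S_r = {u | ‖u‖ = r} (meaning: whenever (v,w) is the midpoint of two points of S_r, both equal (v,w)) only if v = 0 or w = 0. -/
/-!
Suppose `v ≠ 0` and `w ≠ 0`, and put `a = ‖v‖`, `b = ‖w‖`. Moving mass between the two
coordinates, `u₁ = ((1 + t) • v, (1 - s) • w)` and `u₂ = ((1 - t) • v, (1 + s) • w)` with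
`|t|, |s| ≤ 1` (so that homogeneity alone computes their norms) and `t * a = s * b` both have
norm `a + b = r` and midpoint `(v, w)`. Taking `t = b / (|a| + |b|)` and `s = a / (|a| + |b|)`
makes `t ≠ 0` because `b ≠ 0`, so `u₁ ≠ (v, w)`.
-/

section AbsoluteHomogeneity

variable {K M : Type*} [Field K] [LinearOrder K] [IsStrictOrderedRing K]
  [AddCommGroup M] [Module K M] {N : M → K}

theorem apply_one_add_smul_of_abs_le_one (hN : ∀ (c : K) (x : M), N (c • x) = |c| * N x)
    {t : K} (ht : |t| ≤ 1) (x : M) : N ((1 + t) • x) = (1 + t) * N x := by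
  rw [hN, abs_of_nonneg (by linarith [neg_abs_le t])]

theorem apply_one_sub_smul_of_abs_le_one (hN : ∀ (c : K) (x : M), N (c • x) = |c| * N x)
    {t : K} (ht : |t| ≤ 1) (x : M) : N ((1 - t) • x) = (1 - t) * N x := by
  rw [hN, abs_of_nonneg (by linarith [le_abs_self t])]

end AbsoluteHomogeneity

theorem inv_two_smul_one_add_smul_add_one_sub_smul {R M : Type*} [DivisionRing R]
    [NeZero (2 : R)] [AddCommGroup M] [Module R M] (t : R) (x : M) :
    (2⁻¹ : R) • ((1 + t) • x + (1 - t) • x) = x := by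
  rw [← add_smul, smul_smul, add_add_sub_cancel, one_add_one_eq_two,
    inv_mul_cancel₀ two_ne_zero, one_smul]

theorem abs_div_abs_add_abs_le_one {K : Type*} [Field K] [LinearOrder K] [IsStrictOrderedRing K]
    (a b : K) : |a / (|a| + |b|)| ≤ 1 := by
  rw [abs_div, abs_of_nonneg (by positivity : 0 ≤ |a| + |b|)]
  exact div_le_one_of_le₀ (le_add_of_nonneg_right (abs_nonneg b)) (by positivity)

theorem stmt16_general {K X W : Type*} [Field K] [LinearOrder K] [IsStrictOrderedRing K]
    [AddCommGroup X] [Module K X] [AddCommGroup W] [Module K W]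
    (NX : X → K) (NW : W → K)
    (hXh : ∀ (c : K) (x : X), NX (c • x) = |c| * NX x)
    (hW0 : ∀ w : W, NW w = 0 ↔ w = 0)
    (hWh : ∀ (c : K) (w : W), NW (c • w) = |c| * NW w)
    (r : K) (v : X) (w : W) (hvw : NX v + NW w = r)
    (hext : ∀ u₁ u₂ : X × W,
      NX u₁.1 + NW u₁.2 = r → NX u₂.1 + NW u₂.2 = r →
      (v, w) = (2⁻¹ : K) • (u₁ + u₂) → u₁ = (v, w) ∧ u₂ = (v, w)) :
    v = 0 ∨ w = 0 := by
  by_contra! ⟨hv, hw⟩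
  set a := NX v
  set b := NW w
  have hb : b ≠ 0 := mt (hW0 w).mp hw
  set t := b / (|a| + |b|)
  set s := a / (|a| + |b|)
  have ht : |t| ≤ 1 := by
    simpa only [t, add_comm |a|] using abs_div_abs_add_abs_le_one b a
  have hs : |s| ≤ 1 := abs_div_abs_add_abs_le_one a b
  have hts : t * a = s * b := by ring
  have ht0 : t ≠ 0 := div_ne_zero hb (by positivity)
  obtain ⟨hu₁, -⟩ := hext ((1 + t) • v, (1 - s) • w) ((1 - t) • v, (1 + s) • w)
    (by
      rw [apply_one_add_smul_of_abs_le_one hXh ht, apply_one_sub_smul_of_abs_le_one hWh hs]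
      linear_combination hvw + hts)
    (by
      rw [apply_one_sub_smul_of_abs_le_one hXh ht, apply_one_add_smul_of_abs_le_one hWh hs]
      linear_combination hvw - hts)
    (by
      ext
      · exact (inv_two_smul_one_add_smul_add_one_sub_smul t v).symm
      · rw [Prod.smul_snd, Prod.snd_add, add_comm]
        exact (inv_two_smul_one_add_smul_add_one_sub_smul s w).symm)
  have htv : t • v = 0 := by
    simpa [add_smul] using congrArg Prod.fst hu₁
  exact hv ((smul_eq_zero.mp htv).resolve_left ht0)

theorem stmt16 {K X W : Type*} [Field K] [LinearOrder K] [IsStrictOrderedRing K]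
    [AddCommGroup X] [Module K X] [AddCommGroup W] [Module K W]
    (NX : X → K) (NW : W → K)
    (hX0 : ∀ x : X, NX x = 0 ↔ x = 0)
    (hXh : ∀ (c : K) (x : X), NX (c • x) = |c| * NX x)
    (hXt : ∀ x y : X, NX (x + y) ≤ NX x + NX y)
    (hW0 : ∀ w : W, NW w = 0 ↔ w = 0)
    (hWh : ∀ (c : K) (w : W), NW (c • w) = |c| * NW w)
    (hWt : ∀ w z : W, NW (w + z) ≤ NW w + NW z)
    (r : K) (hr : 0 < r) (v : X) (w : W) (hvw : NX v + NW w = r)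
    (hext : ∀ u₁ u₂ : X × W,
      NX u₁.1 + NW u₁.2 = r → NX u₂.1 + NW u₂.2 = r →
      (v, w) = (2⁻¹ : K) • (u₁ + u₂) → u₁ = (v, w) ∧ u₂ = (v, w)) :
    v = 0 ∨ w = 0 :=
  stmt16_general NX NW hXh hW0 hWh r v w hvw hext
end

section
/- Let W be a vector space over an ordered field K with basis b₁, ..., b_n and the 1-norm ‖∑ c_i b_i‖ = ∑ |c_i|. Then for r > 0 the extreme points of the sphere S_r = {w | ‖w‖ = r} are exactly the points ± r b_i, and for any two distinct such extreme points p ≠ q with q ≠ -p one has ‖p - q‖ = 2r, while ‖p - (-p)‖ = 2r as well; in particular every extreme point of S_r is at distance 2r from every other extreme point. -/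
/-!
If a point `p` of the `ℓ¹` sphere had two nonzero coordinates `i ≠ j`, moving mass `± t`,
`t = min |p i| |p j|`, from `|p j|` to `|p i|` would keep it on the sphere, so `p` would be the
midpoint of two other points of the sphere. Conversely `a eᵢ` with `|a| = r` is extreme, since every
`u` on the sphere has `|u i| ≤ r`. Two distinct such points `a eᵢ ≠ b eⱼ` are at distance
`|a| + |b| = 2r` if `i ≠ j`, and if `i = j` then `b = -a` and the distance is `|2a| = 2r`.
-/

open Finset

section AbsSum

variable {ι α : Type*} [Fintype ι] [DecidableEq ι]
  [AddCommGroup α] [LinearOrder α] [IsOrderedAddMonoid α]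

lemma sum_abs_single (i : ι) (c : α) : ∑ k, |(Pi.single i c : ι → α) k| = |c| := by
  rw [Fintype.sum_eq_single i fun k hk => by simp [hk]]
  simp

lemma sum_abs_single_sub_single {i j : ι} (hij : i ≠ j) (a b : α) :
    ∑ k, |(Pi.single i a - Pi.single j b : ι → α) k| = |a| + |b| := by
  rw [Fintype.sum_eq_add i j hij fun k hk => by simp [hk.1, hk.2]]
  simp [hij, hij.symm]

lemma eq_single_of_sum_abs_eq_abs {u : ι → α} {i : ι} (h : ∑ k, |u k| = |u i|) :
    u = Pi.single i (u i) := by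
  rw [← add_sum_erase _ _ (mem_univ i), add_eq_left,
    sum_eq_zero_iff_of_nonneg fun _ _ => abs_nonneg _] at h
  ext k
  rcases eq_or_ne k i with rfl | hk
  · simp
  · simpa [hk] using h k (mem_erase.2 ⟨hk, mem_univ k⟩)

end AbsSum

section OrderedCommRing

variable {K : Type*} [CommRing K] [LinearOrder K] [IsStrictOrderedRing K]

lemma abs_add_mul_sign {x s : K} (hx : x ≠ 0) (hs : |s| ≤ |x|) :
    |x + s * SignType.sign x| = |x| + s := by
  have hs' := neg_abs_le s
  rcases hx.lt_or_gt with hx | hx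
  · rw [sign_neg hx, SignType.coe_neg_one, mul_neg_one, abs_of_neg hx]
    rw [abs_of_neg hx] at hs
    rw [abs_of_nonpos (by linarith)]
    ring
  · rw [sign_pos hx, SignType.coe_one, mul_one, abs_of_pos hx]
    rw [abs_of_pos hx] at hs
    rw [abs_of_nonneg (by linarith)]

lemma eq_of_add_eq_two_mul_of_abs_le {x y a : K} (hxy : x + y = 2 * a) (hx : |x| ≤ |a|)
    (hy : |y| ≤ |a|) : x = a ∧ y = a := by
  rw [abs_le] at hx hy
  rcases abs_cases a with ⟨h, _⟩ | ⟨h, _⟩ <;> rw [h] at hx hy <;> constructor <;> linarith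

end OrderedCommRing

-- Extreme points in the midpoint sense (`Set.extremePoints` uses open segments instead); binders
-- are ordered so that the predicate in `stmt17` unfolds to this one.
def IsMidpointExtreme (K : Type*) {E : Type*} [DivisionRing K] [AddCommGroup E] [Module K E]
    (S : Set E) (p : E) : Prop :=
  p ∈ S ∧ ∀ u₁ u₂, u₁ ∈ S → u₂ ∈ S → p = (2⁻¹ : K) • (u₁ + u₂) → u₁ = p ∧ u₂ = p

section L1Sphere

variable {ι K : Type*} [Fintype ι] [DecidableEq ι] [Field K] [LinearOrder K] [IsStrictOrderedRing K]

variable (ι) in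
def l1Sphere (r : K) : Set (ι → K) := {u | ∑ i, |u i| = r}

lemma sum_abs_add_smul_sign_sub_sign {p : ι → K} {i j : ι} (hij : i ≠ j) (hi : p i ≠ 0)
    (hj : p j ≠ 0) {s : K} (hsi : |s| ≤ |p i|) (hsj : |s| ≤ |p j|) :
    ∑ k, |(p + s • (Pi.single i (SignType.sign (p i) : K) -
      Pi.single j (SignType.sign (p j) : K)) : ι → K) k| = ∑ k, |p k| := by
  rw [← sub_eq_zero, ← sum_sub_distrib, Fintype.sum_eq_add i j hij fun k hk => by simp [hk.1, hk.2]]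
  simp only [Pi.add_apply, Pi.smul_apply, Pi.sub_apply, Pi.single_eq_same, Pi.single_eq_of_ne hij,
    Pi.single_eq_of_ne hij.symm, smul_eq_mul, sub_zero, zero_sub, mul_neg, ← neg_mul]
  rw [abs_add_mul_sign hi hsi, abs_add_mul_sign hj (by rwa [abs_neg])]
  ring

lemma eq_of_isMidpointExtreme_l1Sphere {r : K} {p : ι → K}
    (hp : IsMidpointExtreme K (l1Sphere ι r) p) {i j : ι} (hi : p i ≠ 0) (hj : p j ≠ 0) :
    i = j := by
  by_contra hij
  set t := min |p i| |p j|
  have ht : 0 < t := lt_min (abs_pos.2 hi) (abs_pos.2 hj)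
  set v : ι → K := Pi.single i (SignType.sign (p i) : K) - Pi.single j (SignType.sign (p j) : K)
  have hmem : ∀ s, |s| ≤ t → p + s • v ∈ l1Sphere ι r := fun s hs =>
    (sum_abs_add_smul_sign_sub_sign hij hi hj (hs.trans (min_le_left _ _))
      (hs.trans (min_le_right _ _))).trans hp.1
  have hmid : p = (2⁻¹ : K) • ((p + t • v) + (p + (-t) • v)) := by module
  have hfix := (hp.2 _ _ (hmem t (abs_of_pos ht).le) (hmem (-t) (by rw [abs_neg, abs_of_pos ht]))
    hmid).1
  have hv : v = 0 := (smul_eq_zero.1 (by simpa using hfix)).resolve_left ht.ne'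
  have hsign : (SignType.sign (p i) : K) = 0 := by simpa [v, hij] using congrFun hv i
  exact hi (by rw [← sign_mul_abs (p i), hsign, zero_mul])

lemma exists_eq_single_of_isMidpointExtreme_l1Sphere {r : K} (hr : 0 < r) {p : ι → K}
    (hp : IsMidpointExtreme K (l1Sphere ι r) p) : ∃ i a, |a| = r ∧ p = Pi.single i a := by
  obtain ⟨i, hi⟩ : ∃ i, p i ≠ 0 := by
    by_contra! h
    exact hr.ne (by simpa [l1Sphere, h] using hp.1)
  have hsum : ∑ k, |p k| = |p i| := Fintype.sum_eq_single i fun k hk => by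
    by_contra hpk
    exact hk (eq_of_isMidpointExtreme_l1Sphere hp (abs_ne_zero.1 hpk) hi)
  exact ⟨i, p i, hsum.symm.trans hp.1, eq_single_of_sum_abs_eq_abs hsum⟩

lemma isMidpointExtreme_l1Sphere_single {r : K} (i : ι) {a : K} (ha : |a| = r) :
    IsMidpointExtreme K (l1Sphere ι r) (Pi.single i a) := by
  refine ⟨(sum_abs_single i a).trans ha, fun u₁ u₂ hu₁ hu₂ hmid => ?_⟩
  have hle : ∀ u ∈ l1Sphere ι r, |u i| ≤ |a| := fun u hu =>
    ha ▸ hu ▸ single_le_sum (fun k _ => abs_nonneg (u k)) (mem_univ i)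
  have hsum : u₁ i + u₂ i = 2 * a := by
    have := congrFun hmid i
    simp only [Pi.single_eq_same, Pi.smul_apply, Pi.add_apply, smul_eq_mul] at this
    linarith
  have hsingle : ∀ u ∈ l1Sphere ι r, u i = a → u = Pi.single i a := fun u hu hua =>
    hua ▸ eq_single_of_sum_abs_eq_abs (hu.trans (ha.symm.trans (congrArg abs hua).symm))
  obtain ⟨h₁, h₂⟩ := eq_of_add_eq_two_mul_of_abs_le hsum (hle u₁ hu₁) (hle u₂ hu₂)
  exact ⟨hsingle u₁ hu₁ h₁, hsingle u₂ hu₂ h₂⟩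

theorem isMidpointExtreme_l1Sphere_iff {r : K} (hr : 0 < r) {p : ι → K} :
    IsMidpointExtreme K (l1Sphere ι r) p ↔ ∃ i a, |a| = r ∧ p = Pi.single i a := by
  refine ⟨exists_eq_single_of_isMidpointExtreme_l1Sphere hr, ?_⟩
  rintro ⟨i, a, ha, rfl⟩
  exact isMidpointExtreme_l1Sphere_single i ha

lemma sum_abs_single_sub_single_of_abs_eq {r : K} {i j : ι} {a b : K} (ha : |a| = r)
    (hb : |b| = r) (hne : (Pi.single i a : ι → K) ≠ Pi.single j b) :
    ∑ k, |(Pi.single i a - Pi.single j b : ι → K) k| = 2 * r := by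
  rcases eq_or_ne i j with rfl | hij
  · have hba : b = -a := by
      have hab : a ≠ b := by rintro rfl; exact hne rfl
      exact neg_eq_iff_eq_neg.1 ((abs_eq_abs.1 (ha.trans hb.symm)).resolve_left hab).symm
    rw [← Pi.single_sub, sum_abs_single, hba, sub_neg_eq_add, ← two_mul, abs_mul, abs_two, ha]
  · rw [sum_abs_single_sub_single hij, ha, hb, two_mul]

end L1Sphere

theorem stmt17 {K : Type*} [Field K] [LinearOrder K] [IsStrictOrderedRing K] (n : ℕ) (r : K) (hr : 0 < r) :
    (∀ p : Fin n → K,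
      ((∑ i, |p i|) = r ∧
        ∀ u₁ u₂ : Fin n → K, (∑ i, |u₁ i|) = r → (∑ i, |u₂ i|) = r →
          p = (2⁻¹ : K) • (u₁ + u₂) → u₁ = p ∧ u₂ = p) ↔
      (∃ i : Fin n, p = r • (Pi.single i (1 : K) : Fin n → K) ∨ p = -(r • (Pi.single i (1 : K) : Fin n → K)))) ∧
    (∀ p q : Fin n → K,
      ((∑ i, |p i|) = r ∧
        ∀ u₁ u₂ : Fin n → K, (∑ i, |u₁ i|) = r → (∑ i, |u₂ i|) = r →
          p = (2⁻¹ : K) • (u₁ + u₂) → u₁ = p ∧ u₂ = p) →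
      ((∑ i, |q i|) = r ∧
        ∀ u₁ u₂ : Fin n → K, (∑ i, |u₁ i|) = r → (∑ i, |u₂ i|) = r →
          q = (2⁻¹ : K) • (u₁ + u₂) → u₁ = q ∧ u₂ = q) →
      p ≠ q → (∑ i, |(p - q) i|) = 2 * r) := by
  have key : ∀ p : Fin n → K,
      IsMidpointExtreme K (l1Sphere (Fin n) r) p ↔ ∃ i a, |a| = r ∧ p = Pi.single i a :=
    fun p => isMidpointExtreme_l1Sphere_iff hr
  refine ⟨fun p => (key p).trans ?_, fun p q hp hq hpq => ?_⟩
  · simp only [abs_eq hr.le, or_and_right, exists_or, exists_eq_left, ← Pi.single_smul,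
      smul_eq_mul, mul_one, ← Pi.single_neg]
  · obtain ⟨i, a, ha, rfl⟩ := (key p).1 hp
    obtain ⟨j, b, hb, rfl⟩ := (key q).1 hq
    exact sum_abs_single_sub_single_of_abs_eq ha hb hpq
end
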